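/- arXiv:2401.06111 — 3 statements merged into one kernel-verified Lean document; each statement's English description precedes it below -/
import Mathlib

section
/- Every integer indefinite binary quadratic form F(x,y) = Ax² + 2Bxy + Cy² with positive integer coefficients A, B, C can be obtained from a form f(x,y) = ax² + 2bxy - cy² (with a, b, c ∈ ℤ_{≥0} and a + 2b - c > 0) by applying a unimodular matrix G = [[x₁, x₂],[y₁, y₂]] ∈ GL(2,ℤ) whose entries satisfy x₁ ≥ y₁ ≥ 0 and x₂ ≥ y₂ ≥ 0. -/
/-!
Write `(A, B, C)` for the form `A x² + 2 B x y + C y²`. If `2B < A + C`, the discriminant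
`B² - AC ≥ 0` forces `A < B` or `C < B`; in the first case the substitution `x ↦ x - y`
turns the form into `(A, B - A, A + C - 2B)`, again with positive coefficients, the same
discriminant and smaller `A + C` (the second case is the first with `x` and `y` exchanged).
Composing with the inverse substitution keeps the entries of `G` ordered and nonnegative.
The descent stops once `A + C ≤ 2B`, where a single shear reaches a form `a x² + 2bxy - cy²`.
-/

def IsObtainable (A B C : ℤ) : Prop :=
  ∃ a b c x₁ x₂ y₁ y₂ : ℤ,
    0 ≤ a ∧ 0 ≤ b ∧ 0 ≤ c ∧ a + 2 * b - c > 0 ∧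
    x₁ ≥ y₁ ∧ y₁ ≥ 0 ∧ x₂ ≥ y₂ ∧ y₂ ≥ 0 ∧
    (x₁ * y₂ - x₂ * y₁ = 1 ∨ x₁ * y₂ - x₂ * y₁ = -1) ∧
    ∀ x y : ℤ, A * x ^ 2 + 2 * B * x * y + C * y ^ 2 =
      a * (x₁ * x + x₂ * y) ^ 2 + 2 * b * (x₁ * x + x₂ * y) * (y₁ * x + y₂ * y)
        - c * (y₁ * x + y₂ * y) ^ 2

namespace IsObtainable

theorem swap {A B C : ℤ} (h : IsObtainable C B A) : IsObtainable A B C := by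
  obtain ⟨a, b, c, x₁, x₂, y₁, y₂, ha, hb, hc, hpos, hx, hy₁, hx', hy₂, hdet, hF⟩ := h
  refine ⟨a, b, c, x₂, x₁, y₂, y₁, ha, hb, hc, hpos, hx', hy₂, hx, hy₁, ?_, fun x y => ?_⟩
  · rcases hdet with hdet | hdet
    · exact Or.inr (by linear_combination -hdet)
    · exact Or.inl (by linear_combination -hdet)
  · linear_combination hF y x

theorem of_shear {A B C : ℤ} (h : IsObtainable A (B - A) (A + C - 2 * B)) :
    IsObtainable A B C := by
  obtain ⟨a, b, c, x₁, x₂, y₁, y₂, ha, hb, hc, hpos, hx, hy₁, hx', hy₂, hdet, hF⟩ := h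
  refine ⟨a, b, c, x₁, x₁ + x₂, y₁, y₁ + y₂, ha, hb, hc, hpos, hx, hy₁, by omega, by omega,
    ?_, fun x y => ?_⟩
  · rcases hdet with hdet | hdet
    · exact Or.inl (by linear_combination hdet)
    · exact Or.inr (by linear_combination hdet)
  · linear_combination hF (x + y) y

theorem of_le_of_add_le {A B C : ℤ} (hA : 0 ≤ A) (hC : 0 < C) (hAB : A ≤ B)
    (hsum : A + C ≤ 2 * B) : IsObtainable A B C :=
  ⟨A, B - A, 2 * B - A - C, 1, 1, 0, 1, hA, by omega, by omega, by omega, by omega, le_rfl,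
    le_rfl, zero_le_one, Or.inl (by norm_num), fun x y => by ring⟩

end IsObtainable

theorem lt_or_lt_of_two_mul_lt_add {A B C : ℤ} (hB : 0 < B) (hdisc : 0 ≤ B ^ 2 - A * C)
    (hsum : 2 * B < A + C) : A < B ∨ C < B := by
  by_contra! h
  nlinarith [mul_nonneg (sub_nonneg.2 h.1) (sub_nonneg.2 h.2)]

theorem isObtainable_of_pos {A B C : ℤ} (hA : 0 < A) (hB : 0 < B) (hC : 0 < C)
    (hdisc : 0 ≤ B ^ 2 - A * C) : IsObtainable A B C := by
  by_cases hsum : A + C ≤ 2 * B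
  · rcases le_total A B with hAB | hBA
    · exact .of_le_of_add_le hA.le hC hAB hsum
    · exact .swap (.of_le_of_add_le hC.le hA (by omega) (by omega))
  rcases lt_or_lt_of_two_mul_lt_add hB hdisc (by omega) with hAB | hCB
  · exact .of_shear (isObtainable_of_pos hA (by omega) (by omega) (by linear_combination hdisc))
  · exact .swap (.of_shear (isObtainable_of_pos hC (by omega) (by omega)
      (by linear_combination hdisc)))
termination_by (A + C).toNat

/-- Every integer indefinite binary quadratic form
`F(x,y) = A x² + 2 B x y + C y²` with positive integer coefficients can be
obtained from a form `f(x,y) = a x² + 2 b x y - c y²` (with `a,b,c ≥ 0` and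
`a + 2b - c > 0`) by applying a unimodular matrix `G = [[x₁,x₂],[y₁,y₂]]`
with `x₁ ≥ y₁ ≥ 0` and `x₂ ≥ y₂ ≥ 0`, i.e. `F(x,y) = f(x₁x + x₂y, y₁x + y₂y)`. -/
theorem stmt_2 (A B C : ℤ) (hA : 0 < A) (hB : 0 < B) (hC : 0 < C)
    (hindef : 0 ≤ B ^ 2 - A * C) :
    ∃ a b c x₁ x₂ y₁ y₂ : ℤ,
      0 ≤ a ∧ 0 ≤ b ∧ 0 ≤ c ∧ a + 2 * b - c > 0 ∧
      x₁ ≥ y₁ ∧ y₁ ≥ 0 ∧ x₂ ≥ y₂ ∧ y₂ ≥ 0 ∧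
      (x₁ * y₂ - x₂ * y₁ = 1 ∨ x₁ * y₂ - x₂ * y₁ = -1) ∧
      ∀ x y : ℤ, A * x ^ 2 + 2 * B * x * y + C * y ^ 2 =
        a * (x₁ * x + x₂ * y) ^ 2 + 2 * b * (x₁ * x + x₂ * y) * (y₁ * x + y₂ * y)
          - c * (y₁ * x + y₂ * y) ^ 2 :=
  isObtainable_of_pos hA hB hC hindef
end

section
/- Let B ≥ 1 be an integer and C ≥ 0 an integer, and write C = sB - r with integers s ≥ 1 and 0 < r ≤ B. Let P = conv{(0,0),(1,0)} and Q = conv{(s,0),(1,0),(0,r),(0,B)}. Then Vol₂(P) = 0, Vol₂(Q) = C, and V(P,Q) = B. -/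
open Pointwise MeasureTheory

/-- The embedding of `ℤ²` into `ℝ²`. -/
def toR2 (p : ℤ × ℤ) : ℝ × ℝ := ((p.1 : ℝ), (p.2 : ℝ))

/-- A lattice polygon: the convex hull of a non-empty finite set of points of `ℤ²`. -/
def IsLatticePolygon (S : Set (ℝ × ℝ)) : Prop :=
  ∃ F : Finset (ℤ × ℤ), F.Nonempty ∧ S = convexHull ℝ (toR2 '' ↑F)

/-- The normalized volume: twice the Euclidean area. -/
noncomputable def nvol (S : Set (ℝ × ℝ)) : ℝ := 2 * (volume S).toReal

/-- The normalized mixed volume `V(P,Q) = (Vol₂(P+Q) - Vol₂(P) - Vol₂(Q))/2`. -/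
noncomputable def mixedVol (P Q : Set (ℝ × ℝ)) : ℝ :=
  (nvol (P + Q) - nvol P - nvol Q) / 2

/-! The quadrilateral `Q` is cut by its diagonal from `(1,0)` to `(0,B)` into triangles of
normalized areas `(s-1)B` and `B-r`; the pentagon `P + Q`, with vertices `(1,0)`, `(s+1,0)`,
`(1,B)`, `(0,B)`, `(0,r)`, is cut by the same diagonal and the line `x = 1` into triangles of
normalized areas `sB`, `B` and `B-r`. A triangle `abc` has normalized area `|det(b-a, c-a)|`, being
an affine image of the standard triangle (half of the unit square), and the pieces meet along
lines, which are Lebesgue-null. -/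

section LevelSet

variable {E : Type*} [NormedAddCommGroup E] [NormedSpace ℝ E] [MeasurableSpace E] [BorelSpace E]
  [FiniteDimensional ℝ E] (μ : Measure E) [μ.IsAddHaarMeasure] {f : E →ₗ[ℝ] ℝ}

theorem addHaar_setOf_apply_eq (hf : f ≠ 0) (t : ℝ) : μ {x | f x = t} = 0 := by
  obtain ⟨x₀, rfl⟩ : ∃ x₀, f x₀ = t := by
    obtain ⟨x, hx⟩ : ∃ x, f x ≠ 0 := by
      by_contra! h
      exact hf (LinearMap.ext h)
    exact ⟨(t / f x) • x, by simp [hx]⟩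
  have : {x | f x = f x₀} = (· + -x₀) ⁻¹' (LinearMap.ker f : Set E) := by
    ext x
    simp [← sub_eq_add_neg, sub_eq_zero]
  rw [this, measure_preimage_add_right]
  exact Measure.addHaar_submodule μ _ (by rwa [Ne, LinearMap.ker_eq_top])

theorem addHaar_union_of_halfSpaces {A B : Set E} {t : ℝ} (hf : f ≠ 0)
    (hA : ∀ x ∈ A, t ≤ f x) (hB : ∀ x ∈ B, f x ≤ t) (hBm : NullMeasurableSet B μ) :
    μ (A ∪ B) = μ A + μ B :=
  measure_union₀ hBm <| measure_mono_null (fun x hx => le_antisymm (hB x hx.2) (hA x hx.1))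
    (addHaar_setOf_apply_eq μ hf t)

end LevelSet

section HalfSpace

variable {E : Type*} [AddCommGroup E] [Module ℝ E] {f : E →ₗ[ℝ] ℝ} {s : Set E} {t : ℝ}

theorem LinearMap.le_of_mem_convexHull (h : ∀ x ∈ s, f x ≤ t) {x : E}
    (hx : x ∈ convexHull ℝ s) : f x ≤ t :=
  convexHull_min h (convex_halfSpace_le f.isLinear t) hx

theorem LinearMap.ge_of_mem_convexHull (h : ∀ x ∈ s, t ≤ f x) {x : E}
    (hx : x ∈ convexHull ℝ s) : t ≤ f x :=
  convexHull_min h (convex_halfSpace_ge f.isLinear t) hx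

end HalfSpace

def linearForm (u v : ℝ) : ℝ × ℝ →ₗ[ℝ] ℝ :=
  u • LinearMap.fst ℝ ℝ ℝ + v • LinearMap.snd ℝ ℝ ℝ

@[simp]
theorem linearForm_apply (u v : ℝ) (p : ℝ × ℝ) : linearForm u v p = u * p.1 + v * p.2 := rfl

theorem linearForm_ne_zero {u v : ℝ} (h : u ≠ 0 ∨ v ≠ 0) : linearForm u v ≠ 0 := by
  intro h0
  have h1 := LinearMap.congr_fun h0 (1, 0)
  have h2 := LinearMap.congr_fun h0 (0, 1)
  simp at h1 h2
  tauto

def cross (u v : ℝ × ℝ) : ℝ := u.1 * v.2 - u.2 * v.1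

theorem mem_convexHull_triple_of_cross_nonneg {a b c p : ℝ × ℝ}
    (habc : 0 < cross (b - a) (c - a)) (ha : 0 ≤ cross (c - b) (p - b))
    (hb : 0 ≤ cross (a - c) (p - c)) (hc : 0 ≤ cross (b - a) (p - a)) :
    p ∈ convexHull ℝ {a, b, c} := by
  set D := cross (b - a) (c - a)
  -- Cramer's rule: the barycentric coordinates of `p` are the three signed areas divided by `D`.
  have hsum : cross (c - b) (p - b) + cross (a - c) (p - c) + cross (b - a) (p - a) = D := by
    simp only [D, cross, Prod.fst_sub, Prod.snd_sub]
    ring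
  have hp : cross (c - b) (p - b) • a + cross (a - c) (p - c) • b + cross (b - a) (p - a) • c
      = D • p := by
    ext <;> simp only [D, cross, Prod.fst_sub, Prod.snd_sub, Prod.fst_add, Prod.snd_add,
      Prod.smul_fst, Prod.smul_snd, smul_eq_mul] <;> ring
  have hmem := (convex_convexHull ℝ ({a, b, c} : Set (ℝ × ℝ))).sum_mem
    (t := Finset.univ) (w := ![cross (c - b) (p - b) / D, cross (a - c) (p - c) / D,
      cross (b - a) (p - a) / D]) (z := ![a, b, c])
    (by intro i _; fin_cases i <;> simp <;> positivity)
    (by simp [Fin.sum_univ_three]; field_simp; linarith)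
    (by intro i _; fin_cases i <;> simp [subset_convexHull ℝ _ _])
  convert hmem using 1
  simp only [Fin.sum_univ_three, Matrix.cons_val_zero, Matrix.cons_val_one, Matrix.cons_val_two,
    Matrix.head_cons, Matrix.tail_cons, div_eq_inv_mul, mul_smul, ← smul_add, hp]
  rw [smul_smul, inv_mul_cancel₀ habc.ne', one_smul]

theorem isCompact_convexHull_triple (a b c : ℝ × ℝ) : IsCompact (convexHull ℝ {a, b, c}) :=
  (Set.toFinite _).isCompact_convexHull ℝ

theorem volume_convexHull_triple_eq_mul (a b c : ℝ × ℝ) :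
    volume (convexHull ℝ {a, b, c}) = ENNReal.ofReal |cross (b - a) (c - a)| *
      volume (convexHull ℝ {0, ((1 : ℝ), (0 : ℝ)), (0, 1)}) := by
  set M := Matrix.toLin (Module.Basis.finTwoProd ℝ) (Module.Basis.finTwoProd ℝ)
    !![(b - a).1, (c - a).1; (b - a).2, (c - a).2]
  have himage : convexHull ℝ {a, b, c} =
      (· + a) '' (M '' convexHull ℝ {0, ((1 : ℝ), (0 : ℝ)), (0, 1)}) := by
    rw [Set.image_image,
      show (fun x => M x + a) = ⇑(M.toAffineMap + AffineMap.const ℝ (ℝ × ℝ) a) from rfl,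
      AffineMap.image_convexHull]
    simp [Set.image_insert_eq, M, Matrix.toLin_finTwoProd_apply]
    congr! <;> ext <;> simp
  rw [himage, Set.image_add_right, measure_preimage_add_right, Measure.addHaar_image_linearMap,
    LinearMap.det_toLin, Matrix.det_fin_two_of, cross, mul_comm (c - a).1]

theorem volume_standardTriangle :
    volume (convexHull ℝ {0, ((1 : ℝ), (0 : ℝ)), (0, 1)}) = ENNReal.ofReal (1 / 2) := by
  set T₀ := convexHull ℝ {0, ((1 : ℝ), (0 : ℝ)), (0, 1)}
  set T₁ := convexHull ℝ {((1 : ℝ), (1 : ℝ)), (0, 1), (1, 0)}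
  have hT₁ : volume T₁ = volume T₀ := by
    rw [volume_convexHull_triple_eq_mul]
    norm_num [cross]
    rfl
  have hsquare : T₁ ∪ T₀ = Set.Icc (0 : ℝ) 1 ×ˢ Set.Icc (0 : ℝ) 1 := by
    have hconvex : Convex ℝ (Set.Icc (0 : ℝ) 1 ×ˢ Set.Icc (0 : ℝ) 1) :=
      (convex_Icc 0 1).prod (convex_Icc 0 1)
    refine subset_antisymm
      (Set.union_subset (convexHull_min ?_ hconvex) (convexHull_min ?_ hconvex))
      fun p ⟨⟨hx₀, hx₁⟩, hy₀, hy₁⟩ => ?_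
    · simp [Set.insert_subset_iff, Prod.le_def]
    · simp [Set.insert_subset_iff, Prod.le_def]
    · rcases le_total 1 (p.1 + p.2) with h | h
      · left
        apply mem_convexHull_triple_of_cross_nonneg <;> simp [cross] <;> linarith
      · right
        apply mem_convexHull_triple_of_cross_nonneg <;> simp [cross] <;> linarith
  have hunion : volume (T₁ ∪ T₀) = volume T₁ + volume T₀ :=
    addHaar_union_of_halfSpaces volume (f := linearForm 1 1) (t := 1)
      (linearForm_ne_zero (Or.inl one_ne_zero))
      (fun p => LinearMap.ge_of_mem_convexHull (by simp))
      (fun p => LinearMap.le_of_mem_convexHull (by simp))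
      (isCompact_convexHull_triple _ _ _).isClosed.measurableSet.nullMeasurableSet
  have hsquare_vol : volume (Set.Icc (0 : ℝ) 1 ×ˢ Set.Icc (0 : ℝ) 1) = 1 := by
    rw [Measure.volume_eq_prod, Measure.prod_prod]
    simp
  rw [hsquare, hsquare_vol, hT₁, ← two_mul] at hunion
  rw [ENNReal.ofReal_div_of_pos two_pos, ENNReal.ofReal_one, ENNReal.ofReal_ofNat,
    ENNReal.eq_div_iff two_ne_zero ENNReal.ofNat_ne_top, hunion]

theorem nvol_convexHull_triple (a b c : ℝ × ℝ) :
    nvol (convexHull ℝ {a, b, c}) = |cross (b - a) (c - a)| := by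
  rw [nvol, volume_convexHull_triple_eq_mul, volume_standardTriangle,
    ← ENNReal.ofReal_mul (abs_nonneg _), ENNReal.toReal_ofReal (by positivity)]
  ring

theorem nvol_convexHull_pair (a b : ℝ × ℝ) : nvol (convexHull ℝ {a, b}) = 0 := by
  have h := nvol_convexHull_triple a b b
  rwa [Set.insert_eq_of_mem (Set.mem_singleton b), cross, mul_comm, sub_self, abs_zero] at h

theorem nvol_union_of_halfPlanes {A B : Set (ℝ × ℝ)} {f : ℝ × ℝ →ₗ[ℝ] ℝ} {t : ℝ}
    (hf : f ≠ 0) (hA : ∀ x ∈ A, t ≤ f x) (hB : ∀ x ∈ B, f x ≤ t) (hAc : IsCompact A)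
    (hBc : IsCompact B) : nvol (A ∪ B) = nvol A + nvol B := by
  rw [nvol, nvol, nvol, addHaar_union_of_halfSpaces volume hf hA hB
      hBc.isClosed.measurableSet.nullMeasurableSet,
    ENNReal.toReal_add hAc.measure_lt_top.ne hBc.measure_lt_top.ne]
  ring

section Quadrilateral

variable {s r b : ℝ} {p : ℝ × ℝ}

theorem mem_segment_of_mul_add_eq (hb : 0 < b) (hx : 0 ≤ p.1) (hy : 0 ≤ p.2)
    (h : b * p.1 + p.2 = b) : p ∈ segment ℝ (1, 0) (0, b) :=
  ⟨p.1, 1 - p.1, hx, by nlinarith, by ring, Prod.ext (by simp) (by simp; linarith)⟩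

theorem mem_convexHull_of_above_diagonal (hs : 1 ≤ s) (hb : 0 < b) (hx : 0 ≤ p.1)
    (hy : 0 ≤ p.2) (h₁ : b ≤ b * p.1 + p.2) (h₂ : b * p.1 + s * p.2 ≤ s * b) :
    p ∈ convexHull ℝ {(1, 0), (s, 0), (0, b)} := by
  rcases hs.eq_or_lt with rfl | hs
  · -- the triangle degenerates to the diagonal
    exact segment_subset_convexHull (by simp) (by simp)
      (mem_segment_of_mul_add_eq hb hx hy (by linarith))
  · apply mem_convexHull_triple_of_cross_nonneg <;> simp [cross] <;> nlinarith

theorem mem_convexHull_of_below_diagonal (hr : 0 < r) (hrb : r ≤ b) (hx : 0 ≤ p.1)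
    (hy : 0 ≤ p.2) (h₁ : r ≤ r * p.1 + p.2) (h₂ : b * p.1 + p.2 ≤ b) :
    p ∈ convexHull ℝ {(1, 0), (0, b), (0, r)} := by
  rcases hrb.eq_or_lt with rfl | hrb
  · exact segment_subset_convexHull (by simp) (by simp)
      (mem_segment_of_mul_add_eq hr hx hy (by linarith))
  · apply mem_convexHull_triple_of_cross_nonneg <;> simp [cross] <;> nlinarith

theorem halfPlanes_of_mem_quadrilateral (hs : 1 ≤ s) (hr : 0 ≤ r) (hrb : r ≤ b)
    (hp : p ∈ convexHull ℝ {(s, 0), (1, 0), (0, r), (0, b)}) :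
    0 ≤ p.1 ∧ 0 ≤ p.2 ∧ r ≤ r * p.1 + p.2 ∧ b * p.1 + s * p.2 ≤ s * b := by
  have h₁ := LinearMap.ge_of_mem_convexHull (f := linearForm 1 0) (t := 0)
    (by simp; linarith) hp
  have h₂ := LinearMap.ge_of_mem_convexHull (f := linearForm 0 1) (t := 0)
    (by simp; exact ⟨hr, hr.trans hrb⟩) hp
  have h₃ := LinearMap.ge_of_mem_convexHull (f := linearForm r 1) (t := r)
    (by simp; exact ⟨by nlinarith, hrb⟩) hp
  have h₄ := LinearMap.le_of_mem_convexHull (f := linearForm b s) (t := s * b)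
    (by simp; exact ⟨(mul_comm b s).le, by nlinarith, by nlinarith⟩) hp
  simp only [linearForm_apply] at h₁ h₂ h₃ h₄
  exact ⟨by linarith, by linarith, by linarith, h₄⟩

theorem quadrilateral_eq_union (hs : 1 ≤ s) (hr : 0 < r) (hrb : r ≤ b) :
    convexHull ℝ {(s, 0), (1, 0), (0, r), (0, b)} =
      convexHull ℝ {(1, 0), (s, 0), (0, b)} ∪ convexHull ℝ {(1, 0), (0, b), (0, r)} := by
  refine subset_antisymm (fun p hp => ?_)
    (Set.union_subset (convexHull_mono ?_) (convexHull_mono ?_))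
  · obtain ⟨hx, hy, h₁, h₂⟩ := halfPlanes_of_mem_quadrilateral hs hr.le hrb hp
    rcases le_total (b * p.1 + p.2) b with h | h
    · exact Or.inr (mem_convexHull_of_below_diagonal hr hrb hx hy h₁ h)
    · exact Or.inl (mem_convexHull_of_above_diagonal hs (hr.trans_le hrb) hx hy h h₂)
  all_goals simp [Set.insert_subset_iff]

theorem segment_add_quadrilateral_eq_union (hs : 1 ≤ s) (hr : 0 < r) (hrb : r ≤ b) :
    convexHull ℝ {((0 : ℝ), (0 : ℝ)), (1, 0)} +
        convexHull ℝ {(s, 0), (1, 0), (0, r), (0, b)} =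
      (convexHull ℝ {(1, 0), (s + 1, 0), (1, b)} ∪ convexHull ℝ {(1, 0), (1, b), (0, b)}) ∪
        convexHull ℝ {(1, 0), (0, b), (0, r)} := by
  refine subset_antisymm ?_ ?_
  · rintro _ ⟨u, hu, q, hq, rfl⟩
    rw [convexHull_pair, segment_eq_image'] at hu
    obtain ⟨θ, ⟨hθ₀, hθ₁⟩, rfl⟩ := hu
    obtain ⟨hx, hy, h₁, h₂⟩ := halfPlanes_of_mem_quadrilateral hs hr.le hrb hq
    rcases le_total (b * (θ + q.1) + q.2) b with h | h
    · exact Or.inr <| mem_convexHull_of_below_diagonal hr hrb (by simp; linarith) (by simpa)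
        (by simp; nlinarith) (by simpa)
    rcases le_total (θ + q.1) 1 with h' | h'
    · refine Or.inl (Or.inr ?_)
      apply mem_convexHull_triple_of_cross_nonneg <;> simp [cross] <;> nlinarith
    · refine Or.inl (Or.inl ?_)
      apply mem_convexHull_triple_of_cross_nonneg <;> simp [cross] <;> nlinarith
  · have hmem : ∀ u ∈ ({((0 : ℝ), (0 : ℝ)), (1, 0)} : Set (ℝ × ℝ)),
        ∀ v ∈ ({(s, 0), (1, 0), (0, r), (0, b)} : Set (ℝ × ℝ)),
        u + v ∈ convexHull ℝ {((0 : ℝ), (0 : ℝ)), (1, 0)} +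
          convexHull ℝ {(s, 0), (1, 0), (0, r), (0, b)} :=
      fun u hu v hv => Set.add_mem_add (subset_convexHull ℝ _ hu) (subset_convexHull ℝ _ hv)
    have h₁₀ := hmem (0, 0) (by simp) (1, 0) (by simp)
    have hs₀ := hmem (1, 0) (by simp) (s, 0) (by simp)
    have h₁b := hmem (1, 0) (by simp) (0, b) (by simp)
    have h₀b := hmem (0, 0) (by simp) (0, b) (by simp)
    have h₀r := hmem (0, 0) (by simp) (0, r) (by simp)
    simp only [Prod.mk_add_mk, add_zero, zero_add] at h₁₀ hs₀ h₁b h₀b h₀r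
    rw [add_comm (1 : ℝ)] at hs₀
    refine Set.union_subset (Set.union_subset ?_ ?_) ?_ <;>
      refine convexHull_min ?_ ((convex_convexHull ℝ _).add (convex_convexHull ℝ _)) <;>
      rintro _ (rfl | rfl | rfl)
    exacts [h₁₀, hs₀, h₁b, h₁₀, h₁b, h₀b, h₁₀, h₀b, h₀r]

theorem nvol_quadrilateral (hs : 1 ≤ s) (hr : 0 < r) (hrb : r ≤ b) :
    nvol (convexHull ℝ {(s, 0), (1, 0), (0, r), (0, b)}) = s * b - r := by
  have hT₁ : ∀ p ∈ convexHull ℝ {(1, 0), (s, 0), (0, b)}, b ≤ linearForm b 1 p :=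
    fun p => LinearMap.ge_of_mem_convexHull (by simp; nlinarith)
  have hT₂ : ∀ p ∈ convexHull ℝ {(1, 0), (0, b), (0, r)}, linearForm b 1 p ≤ b :=
    fun p => LinearMap.le_of_mem_convexHull (by simpa using hrb)
  rw [quadrilateral_eq_union hs hr hrb,
    nvol_union_of_halfPlanes (linearForm_ne_zero (Or.inr one_ne_zero)) hT₁ hT₂
      (isCompact_convexHull_triple _ _ _) (isCompact_convexHull_triple _ _ _),
    nvol_convexHull_triple, nvol_convexHull_triple]
  simp only [cross, Prod.fst_sub, Prod.snd_sub]
  rw [abs_of_nonneg (by nlinarith), abs_of_nonneg (by nlinarith)]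
  ring

theorem nvol_segment_add_quadrilateral (hs : 1 ≤ s) (hr : 0 < r) (hrb : r ≤ b) :
    nvol (convexHull ℝ {((0 : ℝ), (0 : ℝ)), (1, 0)} +
      convexHull ℝ {(s, 0), (1, 0), (0, r), (0, b)}) = s * b + 2 * b - r := by
  have hb : 0 < b := hr.trans_le hrb
  set U₁ := convexHull ℝ ({(1, 0), (s + 1, 0), (1, b)} : Set (ℝ × ℝ))
  set U₂ := convexHull ℝ ({(1, 0), (1, b), (0, b)} : Set (ℝ × ℝ))
  set T := convexHull ℝ ({(1, 0), (0, b), (0, r)} : Set (ℝ × ℝ))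
  have hU₁ : ∀ p ∈ U₁, 1 ≤ linearForm 1 0 p :=
    fun p => LinearMap.ge_of_mem_convexHull (by simpa using zero_le_one.trans hs)
  have hU₂ : ∀ p ∈ U₂, linearForm 1 0 p ≤ 1 :=
    fun p => LinearMap.le_of_mem_convexHull (by simp)
  have hU : ∀ p ∈ U₁ ∪ U₂, b ≤ linearForm b 1 p := by
    refine fun p hp => hp.elim (LinearMap.ge_of_mem_convexHull ?_)
      (LinearMap.ge_of_mem_convexHull ?_)
    · simp
      constructor <;> nlinarith
    · simpa using hb.le
  have hT : ∀ p ∈ T, linearForm b 1 p ≤ b :=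
    fun p => LinearMap.le_of_mem_convexHull (by simpa using hrb)
  rw [segment_add_quadrilateral_eq_union hs hr hrb,
    nvol_union_of_halfPlanes (linearForm_ne_zero (Or.inr one_ne_zero)) hU hT
      ((isCompact_convexHull_triple _ _ _).union (isCompact_convexHull_triple _ _ _))
      (isCompact_convexHull_triple _ _ _),
    nvol_union_of_halfPlanes (linearForm_ne_zero (Or.inl one_ne_zero)) hU₁ hU₂
      (isCompact_convexHull_triple _ _ _) (isCompact_convexHull_triple _ _ _),
    nvol_convexHull_triple, nvol_convexHull_triple, nvol_convexHull_triple]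
  simp only [cross, Prod.fst_sub, Prod.snd_sub]
  rw [abs_of_nonneg (by nlinarith), abs_of_nonneg (by nlinarith), abs_of_nonneg (by nlinarith)]
  ring

end Quadrilateral

theorem stmt_10_general (B C s r : ℤ) (hs : 1 ≤ s)
    (hr0 : 0 < r) (hrB : r ≤ B) (hsr : C = s * B - r)
    (P Q : Set (ℝ × ℝ))
    (hP : P = convexHull ℝ {((0 : ℝ), (0 : ℝ)), (1, 0)})
    (hQ : Q = convexHull ℝ {(((s : ℝ)), (0 : ℝ)), (1, 0), (0, (r : ℝ)), (0, (B : ℝ))}) :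
    nvol P = 0 ∧ nvol Q = C ∧ mixedVol P Q = B := by
  subst hP hQ hsr
  have hs' : (1 : ℝ) ≤ s := by exact_mod_cast hs
  have hr' : (0 : ℝ) < r := by exact_mod_cast hr0
  have hrB' : (r : ℝ) ≤ B := by exact_mod_cast hrB
  refine ⟨nvol_convexHull_pair _ _, ?_, ?_⟩
  · rw [nvol_quadrilateral hs' hr' hrB']
    push_cast
    ring
  · rw [mixedVol, nvol_segment_add_quadrilateral hs' hr' hrB', nvol_convexHull_pair,
      nvol_quadrilateral hs' hr' hrB']
    ring

/-- For integers `B ≥ 1`, `C ≥ 0` with `C = sB - r`, `s ≥ 1`,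
`0 < r ≤ B`, the segment `P = conv{(0,0),(1,0)}` and the polygon
`Q = conv{(s,0),(1,0),(0,r),(0,B)}` satisfy `Vol₂(P) = 0`, `Vol₂(Q) = C` and
`V(P,Q) = B`. -/
theorem stmt_10 (B C s r : ℤ) (hB : 1 ≤ B) (hC : 0 ≤ C) (hs : 1 ≤ s)
    (hr0 : 0 < r) (hrB : r ≤ B) (hsr : C = s * B - r)
    (P Q : Set (ℝ × ℝ))
    (hP : P = convexHull ℝ {((0 : ℝ), (0 : ℝ)), (1, 0)})
    (hQ : Q = convexHull ℝ {(((s : ℝ)), (0 : ℝ)), (1, 0), (0, (r : ℝ)), (0, (B : ℝ))}) :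
    nvol P = 0 ∧ nvol Q = C ∧ mixedVol P Q = B :=
  stmt_10_general B C s r hs hr0 hrB hsr P Q hP hQ
end

section
/- For lattice polygons P, Q ⊂ ℝ², the Minkowski inequality holds for normalized volumes: Vol₂(P)·Vol₂(Q) ≤ V(P,Q)², where V(P,Q) = (Vol₂(P+Q) - Vol₂(P) - Vol₂(Q))/2. -/
open Pointwise MeasureTheory

/-! Squaring the planar Brunn–Minkowski inequality `√vol A + √vol B ≤ √vol (A + B)` gives the
claim. Brunn–Minkowski is proved by slicing: the vertical slice lengths `f, g, h` of `A, B, A + B`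
satisfy `f x + g y ≤ h (x + y)` by the one-dimensional inequality for intervals, and their
superlevel sets are intervals. Comparing, through the layer cake formula, the superlevel sets of
`f` and `g` at the same fraction `t` of their maxima `M, N` gives
`vol A / M + vol B / N ≤ vol (A + B) / (M + N)`, which implies Brunn–Minkowski by Cauchy–Schwarz. -/

open Set Bornology
open scoped ENNReal

namespace Real

theorem volume_eq_ofReal_csSup_sub_csInf {s : Set ℝ} (hs : Convex ℝ s) (hne : s.Nonempty)
    (hb : IsBounded s) : volume s = ENNReal.ofReal (sSup s - sInf s) := by
  refine le_antisymm ?_ ?_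
  · calc volume s ≤ volume (Icc (sInf s) (sSup s)) :=
          measure_mono fun x hx => ⟨csInf_le hb.bddBelow hx, le_csSup hb.bddAbove hx⟩
      _ = ENNReal.ofReal (sSup s - sInf s) := volume_Icc
  · calc ENNReal.ofReal (sSup s - sInf s) = volume (Ioo (sInf s) (sSup s)) := volume_Ioo.symm
      _ ≤ volume s := measure_mono fun a ha => by
          obtain ⟨x, hx, hxa⟩ := exists_lt_of_csInf_lt hne ha.1
          obtain ⟨y, hy, hay⟩ := exists_lt_of_lt_csSup hne ha.2
          exact hs.ordConnected.out hx hy ⟨hxa.le, hay.le⟩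

theorem volume_add_volume_le_volume_add {s t : Set ℝ} (hs : Convex ℝ s) (hsne : s.Nonempty)
    (hsb : IsBounded s) (ht : Convex ℝ t) (htne : t.Nonempty) (htb : IsBounded t) :
    volume s + volume t ≤ volume (s + t) := by
  rw [volume_eq_ofReal_csSup_sub_csInf hs hsne hsb, volume_eq_ofReal_csSup_sub_csInf ht htne htb,
    volume_eq_ofReal_csSup_sub_csInf (hs.add ht) (hsne.add htne) (hsb.add htb),
    csSup_add hsne hsb.bddAbove htne htb.bddAbove, csInf_add hsne hsb.bddBelow htne htb.bddBelow,
    ← ENNReal.ofReal_add (sub_nonneg.2 (csInf_le_csSup hsne hsb.bddBelow hsb.bddAbove))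
      (sub_nonneg.2 (csInf_le_csSup htne htb.bddBelow htb.bddAbove))]
  exact (congrArg ENNReal.ofReal (by ring)).le

theorem volumeReal_add_volumeReal_le {s t : Set ℝ} (hs : Convex ℝ s) (hsne : s.Nonempty)
    (hsb : IsBounded s) (ht : Convex ℝ t) (htne : t.Nonempty) (htb : IsBounded t) :
    volume.real s + volume.real t ≤ volume.real (s + t) := by
  rw [measureReal_def, measureReal_def,
    ← ENNReal.toReal_add hsb.measure_lt_top.ne htb.measure_lt_top.ne]
  exact ENNReal.toReal_mono (hsb.add htb).measure_lt_top.ne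
    (volume_add_volume_le_volume_add hs hsne hsb ht htne htb)

theorem volumeReal_smul {r : ℝ} (hr : 0 ≤ r) (s : Set ℝ) :
    volume.real (r • s) = r * volume.real s := by
  simp [measureReal_def, Measure.addHaar_smul_of_nonneg volume hr, ENNReal.toReal_ofReal hr]

end Real

theorem MeasureTheory.measure_le_measure_add {G : Type*} [AddGroup G] [MeasurableSpace G]
    [MeasurableAdd G] (μ : Measure G) [μ.IsAddLeftInvariant] {A B : Set G} {a : G} (ha : a ∈ A) :
    μ B ≤ μ (A + B) :=
  calc μ B = μ (a +ᵥ B) := (measure_vadd μ a B).symm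
    _ ≤ μ (A + B) := measure_mono (vadd_set_subset_add ha)

theorem MeasureTheory.measureReal_le_measureReal_add {G : Type*} [AddGroup G] [MeasurableSpace G]
    [MeasurableAdd G] (μ : Measure G) [μ.IsAddLeftInvariant] {A B : Set G} {a : G} (ha : a ∈ A)
    (hAB : μ (A + B) ≠ ∞) : μ.real B ≤ μ.real (A + B) :=
  ENNReal.toReal_mono hAB (measure_le_measure_add μ ha)

theorem MeasureTheory.ofReal_inv_mul_lintegral_eq {α : Type*} [MeasurableSpace α] (μ : Measure α) {f : α → ℝ}
    (hf0 : 0 ≤ f) (hfm : Measurable f) {M : ℝ} (hM : 0 < M) :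
    ENNReal.ofReal M⁻¹ * ∫⁻ x, ENNReal.ofReal (f x) ∂μ = ∫⁻ t in Ioi 0, μ {x | M * t < f x} := by
  rw [← lintegral_const_mul _ hfm.ennreal_ofReal]
  simp_rw [← ENNReal.ofReal_mul (inv_nonneg.2 hM.le)]
  rw [lintegral_eq_lintegral_meas_lt μ
    (ae_of_all _ fun x => mul_nonneg (inv_nonneg.2 hM.le) (hf0 x)) (hfm.const_mul _).aemeasurable]
  simp_rw [lt_inv_mul_iff₀ hM]

theorem MeasureTheory.measurable_measure_setOf_mul_lt {α : Type*} [MeasurableSpace α] (μ : Measure α)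
    (f : α → ℝ) {M : ℝ} (hM : 0 ≤ M) : Measurable fun t => μ {x | M * t < f x} :=
  Antitone.measurable fun _ _ hst => measure_mono fun _ hx =>
    (mul_le_mul_of_nonneg_left hst hM).trans_lt hx

noncomputable def sliceLength (A : Set (ℝ × ℝ)) (x : ℝ) : ℝ := volume.real (Prod.mk x ⁻¹' A)

section sliceLength

variable {A B : Set (ℝ × ℝ)}

theorem Convex.preimage_prodMk (hA : Convex ℝ A) (x : ℝ) : Convex ℝ (Prod.mk x ⁻¹' A) :=
  fun _ hy₁ _ hy₂ _ _ ha hb hab => by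
    simpa [← add_mul, hab] using hA hy₁ hy₂ ha hb hab

theorem Bornology.IsBounded.preimage_prodMk (hA : IsBounded A) (x : ℝ) :
    IsBounded (Prod.mk x ⁻¹' A) :=
  hA.image_snd.subset fun _ hy => ⟨_, hy, rfl⟩

theorem preimage_prodMk_add_subset (x y : ℝ) :
    Prod.mk x ⁻¹' A + Prod.mk y ⁻¹' B ⊆ Prod.mk (x + y) ⁻¹' (A + B) := by
  rintro _ ⟨u, hu, v, hv, rfl⟩
  exact ⟨(x, u), hu, (y, v), hv, rfl⟩

theorem nonempty_of_sliceLength_pos {x : ℝ} (h : 0 < sliceLength A x) :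
    (Prod.mk x ⁻¹' A).Nonempty :=
  nonempty_iff_ne_empty.2 fun he => by simp [sliceLength, he] at h

theorem sliceLength_le (hA : IsBounded A) (x : ℝ) :
    sliceLength A x ≤ volume.real (Prod.snd '' A) :=
  measureReal_mono (fun _ hy => ⟨_, hy, rfl⟩) hA.image_snd.measure_lt_top.ne

theorem bddAbove_range_sliceLength (hA : IsBounded A) : BddAbove (range (sliceLength A)) :=
  ⟨_, forall_mem_range.2 (sliceLength_le hA)⟩

theorem measurable_sliceLength (hA : MeasurableSet A) : Measurable (sliceLength A) :=
  (measurable_measure_prodMk_left hA).ennreal_toReal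

theorem volume_eq_lintegral_sliceLength (hAm : MeasurableSet A) (hA : IsBounded A) :
    volume A = ∫⁻ x, ENNReal.ofReal (sliceLength A x) := by
  rw [Measure.volume_eq_prod, Measure.prod_apply hAm]
  exact lintegral_congr fun x =>
    (ENNReal.ofReal_toReal (hA.preimage_prodMk x).measure_lt_top.ne).symm

theorem iSup_sliceLength_pos (hAm : MeasurableSet A) (hA : IsBounded A)
    (h : volume.real A ≠ 0) : 0 < ⨆ x, sliceLength A x := by
  by_contra! hle
  have hzero : ∀ x, sliceLength A x ≤ 0 :=
    fun x => (le_ciSup (bddAbove_range_sliceLength hA) x).trans hle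
  apply h
  simp [measureReal_def, volume_eq_lintegral_sliceLength hAm hA, ENNReal.ofReal_eq_zero.2 (hzero _)]

theorem isBounded_setOf_lt_sliceLength (hA : IsBounded A) {c : ℝ} (hc : 0 ≤ c) :
    IsBounded {x | c < sliceLength A x} :=
  hA.image_fst.subset fun _ hx =>
    let ⟨_, hy⟩ := nonempty_of_sliceLength_pos (hc.trans_lt hx)
    ⟨_, hy, rfl⟩

theorem sliceLength_add_sliceLength_le (hA : Convex ℝ A) (hAb : IsBounded A) (hB : Convex ℝ B)
    (hBb : IsBounded B) {x y : ℝ} (hx : (Prod.mk x ⁻¹' A).Nonempty)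
    (hy : (Prod.mk y ⁻¹' B).Nonempty) :
    sliceLength A x + sliceLength B y ≤ sliceLength (A + B) (x + y) :=
  (Real.volumeReal_add_volumeReal_le (hA.preimage_prodMk x) hx (hAb.preimage_prodMk x)
    (hB.preimage_prodMk y) hy (hBb.preimage_prodMk y)).trans
    (measureReal_mono (preimage_prodMk_add_subset x y)
      ((hAb.add hBb).preimage_prodMk _).measure_lt_top.ne)

theorem convex_setOf_lt_sliceLength (hA : Convex ℝ A) (hAb : IsBounded A) {c : ℝ} (hc : 0 ≤ c) :
    Convex ℝ {x | c < sliceLength A x} := by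
  refine convex_iff_forall_pos.2 fun x₁ h₁ x₂ h₂ a b ha hb hab => ?_
  have hincl : a • Prod.mk x₁ ⁻¹' A + b • Prod.mk x₂ ⁻¹' A ⊆ Prod.mk (a • x₁ + b • x₂) ⁻¹' A := by
    rintro _ ⟨_, ⟨y₁, hy₁, rfl⟩, _, ⟨y₂, hy₂, rfl⟩, rfl⟩
    simpa using hA hy₁ hy₂ ha.le hb.le hab
  have hne₁ := nonempty_of_sliceLength_pos (hc.trans_lt h₁)
  have hne₂ := nonempty_of_sliceLength_pos (hc.trans_lt h₂)
  calc c < a * sliceLength A x₁ + b * sliceLength A x₂ := by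
        nlinarith [mul_lt_mul_of_pos_left h₁ ha, mul_lt_mul_of_pos_left h₂ hb]
    _ = volume.real (a • Prod.mk x₁ ⁻¹' A) + volume.real (b • Prod.mk x₂ ⁻¹' A) := by
        rw [Real.volumeReal_smul ha.le, Real.volumeReal_smul hb.le, sliceLength, sliceLength]
    _ ≤ volume.real (a • Prod.mk x₁ ⁻¹' A + b • Prod.mk x₂ ⁻¹' A) :=
        Real.volumeReal_add_volumeReal_le ((hA.preimage_prodMk x₁).smul a) hne₁.smul_set
          ((hAb.preimage_prodMk x₁).smul₀ a) ((hA.preimage_prodMk x₂).smul b) hne₂.smul_set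
          ((hAb.preimage_prodMk x₂).smul₀ b)
    _ ≤ sliceLength A (a • x₁ + b • x₂) :=
        measureReal_mono hincl (hAb.preimage_prodMk _).measure_lt_top.ne

end sliceLength

section Superadditive

variable {f g h : ℝ → ℝ}

theorem volume_setOf_lt_add_volume_setOf_lt_le (hfgh : ∀ x y, 0 < f x → 0 < g y → f x + g y ≤ h (x + y))
    {a b : ℝ} (ha : 0 ≤ a) (hb : 0 ≤ b)
    (hfc : Convex ℝ {x | a < f x}) (hfne : {x | a < f x}.Nonempty) (hfb : IsBounded {x | a < f x})
    (hgc : Convex ℝ {y | b < g y}) (hgne : {y | b < g y}.Nonempty) (hgb : IsBounded {y | b < g y}) :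
    volume {x | a < f x} + volume {y | b < g y} ≤ volume {z | a + b < h z} := by
  refine (Real.volume_add_volume_le_volume_add hfc hfne hfb hgc hgne hgb).trans (measure_mono ?_)
  rintro _ ⟨x, hx, y, hy, rfl⟩
  exact (add_lt_add hx hy).trans_le (hfgh x y (ha.trans_lt hx) (hb.trans_lt hy))

theorem ofReal_inv_mul_lintegral_add_le
    (hf0 : 0 ≤ f) (hg0 : 0 ≤ g) (hh0 : 0 ≤ h) (hfm : Measurable f) (hgm : Measurable g)
    (hhm : Measurable h) (hf_bdd : BddAbove (range f)) (hg_bdd : BddAbove (range g))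
    (hf_conv : ∀ c > 0, Convex ℝ {x | c < f x}) (hg_conv : ∀ c > 0, Convex ℝ {y | c < g y})
    (hf_bnd : ∀ c > 0, IsBounded {x | c < f x}) (hg_bnd : ∀ c > 0, IsBounded {y | c < g y})
    (hfgh : ∀ x y, 0 < f x → 0 < g y → f x + g y ≤ h (x + y))
    (hM : 0 < ⨆ x, f x) (hN : 0 < ⨆ y, g y) :
    ENNReal.ofReal (⨆ x, f x)⁻¹ * (∫⁻ x, ENNReal.ofReal (f x))
      + ENNReal.ofReal (⨆ y, g y)⁻¹ * ∫⁻ y, ENNReal.ofReal (g y)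
      ≤ ENNReal.ofReal ((⨆ x, f x) + ⨆ y, g y)⁻¹ * ∫⁻ z, ENNReal.ofReal (h z) := by
  set M := ⨆ x, f x
  set N := ⨆ y, g y
  rw [ofReal_inv_mul_lintegral_eq volume hf0 hfm hM, ofReal_inv_mul_lintegral_eq volume hg0 hgm hN,
    ofReal_inv_mul_lintegral_eq volume hh0 hhm (add_pos hM hN),
    ← lintegral_add_left (measurable_measure_setOf_mul_lt volume f hM.le)]
  refine setLIntegral_mono' measurableSet_Ioi fun t (ht : 0 < t) => ?_
  -- Strict layers are nonempty for `t < 1`, as `M` and `N` are suprema, and empty for `t ≥ 1`.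
  by_cases ht1 : t < 1
  · have hMt : 0 < M * t := mul_pos hM ht
    have hNt : 0 < N * t := mul_pos hN ht
    rw [add_mul]
    exact volume_setOf_lt_add_volume_setOf_lt_le hfgh hMt.le hNt.le (hf_conv _ hMt)
      (exists_lt_of_lt_ciSup (mul_lt_of_lt_one_right hM ht1)) (hf_bnd _ hMt) (hg_conv _ hNt)
      (exists_lt_of_lt_ciSup (mul_lt_of_lt_one_right hN ht1)) (hg_bnd _ hNt)
  · have hempty {φ : ℝ → ℝ} {L : ℝ} (hL : 0 < L) (hφ : ∀ x, φ x ≤ L) : {x | L * t < φ x} = ∅ :=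
      eq_empty_of_forall_notMem fun x hx =>
        (hφ x).not_gt ((le_mul_of_one_le_right hL.le (not_lt.1 ht1)).trans_lt hx)
    rw [hempty hM (le_ciSup hf_bdd), hempty hN (le_ciSup hg_bdd), measure_empty, zero_add]
    exact zero_le

end Superadditive

theorem Real.sqrt_add_sqrt_le_of_div_add_div_le {a b c M N : ℝ} (ha : 0 ≤ a) (hb : 0 ≤ b)
    (hM : 0 < M) (hN : 0 < N) (h : a / M + b / N ≤ c / (M + N)) : √a + √b ≤ √c := by
  rw [le_div_iff₀ (add_pos hM hN)] at h
  refine Real.le_sqrt_of_sq_le (le_trans ?_ h)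
  obtain ⟨x, hx, rfl⟩ : ∃ x, 0 ≤ x ∧ x ^ 2 = a := ⟨√a, Real.sqrt_nonneg a, Real.sq_sqrt ha⟩
  obtain ⟨y, hy, rfl⟩ : ∃ y, 0 ≤ y ∧ y ^ 2 = b := ⟨√b, Real.sqrt_nonneg b, Real.sq_sqrt hb⟩
  rw [Real.sqrt_sq hx, Real.sqrt_sq hy, div_add_div _ _ hM.ne' hN.ne', div_mul_eq_mul_div,
    le_div_iff₀ (mul_pos hM hN)]
  nlinarith [sq_nonneg (N * x - M * y)]

theorem Real.four_mul_le_sq_sub_sub_of_sqrt_add_sqrt_le {a b c : ℝ} (ha : 0 ≤ a) (hb : 0 ≤ b)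
    (hc : 0 ≤ c) (h : √a + √b ≤ √c) : 4 * a * b ≤ (c - a - b) ^ 2 := by
  have hsq : (√a + √b) ^ 2 ≤ c := by
    simpa [Real.sq_sqrt hc] using pow_le_pow_left₀ (by positivity) h 2
  calc 4 * a * b = (2 * (√a * √b)) ^ 2 := by
        rw [mul_pow, mul_pow, Real.sq_sqrt ha, Real.sq_sqrt hb]; ring
    _ ≤ (c - a - b) ^ 2 := by
        refine pow_le_pow_left₀ (by positivity) ?_ 2
        nlinarith [Real.sq_sqrt ha, Real.sq_sqrt hb]

theorem volumeReal_div_add_volumeReal_div_le {A B : Set (ℝ × ℝ)} (hA : IsCompact A)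
    (hAc : Convex ℝ A) (hB : IsCompact B) (hBc : Convex ℝ B) (hA0 : volume.real A ≠ 0)
    (hB0 : volume.real B ≠ 0) :
    volume.real A / (⨆ x, sliceLength A x) + volume.real B / (⨆ y, sliceLength B y)
      ≤ volume.real (A + B) / ((⨆ x, sliceLength A x) + ⨆ y, sliceLength B y) := by
  have hAB : IsCompact (A + B) := hA.add hB
  have hM := iSup_sliceLength_pos hA.measurableSet hA.isBounded hA0
  have hN := iSup_sliceLength_pos hB.measurableSet hB.isBounded hB0
  have key := ofReal_inv_mul_lintegral_add_le (f := sliceLength A) (g := sliceLength B)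
    (h := sliceLength (A + B)) (fun _ => measureReal_nonneg)
    (fun _ => measureReal_nonneg) (fun _ => measureReal_nonneg)
    (measurable_sliceLength hA.measurableSet) (measurable_sliceLength hB.measurableSet)
    (measurable_sliceLength hAB.measurableSet)
    (bddAbove_range_sliceLength hA.isBounded) (bddAbove_range_sliceLength hB.isBounded)
    (fun _ hc => convex_setOf_lt_sliceLength hAc hA.isBounded hc.le)
    (fun _ hc => convex_setOf_lt_sliceLength hBc hB.isBounded hc.le)
    (fun _ hc => isBounded_setOf_lt_sliceLength hA.isBounded hc.le)
    (fun _ hc => isBounded_setOf_lt_sliceLength hB.isBounded hc.le)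
    (fun _ _ hx hy => sliceLength_add_sliceLength_le hAc hA.isBounded hBc hB.isBounded
      (nonempty_of_sliceLength_pos hx) (nonempty_of_sliceLength_pos hy)) hM hN
  rw [← volume_eq_lintegral_sliceLength hA.measurableSet hA.isBounded,
    ← volume_eq_lintegral_sliceLength hB.measurableSet hB.isBounded,
    ← volume_eq_lintegral_sliceLength hAB.measurableSet hAB.isBounded] at key
  have : volume A < ∞ := hA.measure_lt_top
  have : volume B < ∞ := hB.measure_lt_top
  have : volume (A + B) < ∞ := hAB.measure_lt_top
  have := ENNReal.toReal_mono (by finiteness) key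
  rwa [ENNReal.toReal_add (by finiteness) (by finiteness), ENNReal.toReal_mul,
    ENNReal.toReal_mul, ENNReal.toReal_mul, ENNReal.toReal_ofReal (inv_nonneg.2 hM.le),
    ENNReal.toReal_ofReal (inv_nonneg.2 hN.le),
    ENNReal.toReal_ofReal (inv_nonneg.2 (add_pos hM hN).le), ← measureReal_def,
    ← measureReal_def, ← measureReal_def, inv_mul_eq_div, inv_mul_eq_div, inv_mul_eq_div] at this

theorem sqrt_volumeReal_add_sqrt_volumeReal_le {A B : Set (ℝ × ℝ)} (hA : IsCompact A)
    (hAc : Convex ℝ A) (hAne : A.Nonempty) (hB : IsCompact B) (hBc : Convex ℝ B)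
    (hBne : B.Nonempty) : √(volume.real A) + √(volume.real B) ≤ √(volume.real (A + B)) := by
  have hAB : volume (A + B) ≠ ∞ := (hA.add hB).measure_lt_top.ne
  by_cases hA0 : volume.real A = 0
  · rw [hA0, Real.sqrt_zero, zero_add]
    exact Real.sqrt_le_sqrt (measureReal_le_measureReal_add volume hAne.some_mem hAB)
  by_cases hB0 : volume.real B = 0
  · rw [hB0, Real.sqrt_zero, add_zero, add_comm A B]
    exact Real.sqrt_le_sqrt
      (measureReal_le_measureReal_add volume hBne.some_mem (add_comm A B ▸ hAB))
  exact Real.sqrt_add_sqrt_le_of_div_add_div_le measureReal_nonneg measureReal_nonneg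
    (iSup_sliceLength_pos hA.measurableSet hA.isBounded hA0)
    (iSup_sliceLength_pos hB.measurableSet hB.isBounded hB0)
    (volumeReal_div_add_volumeReal_div_le hA hAc hB hBc hA0 hB0)

theorem IsLatticePolygon.isCompact {P : Set (ℝ × ℝ)} (hP : IsLatticePolygon P) : IsCompact P := by
  obtain ⟨F, -, rfl⟩ := hP
  exact (F.finite_toSet.image _).isCompact_convexHull ℝ

theorem IsLatticePolygon.convex {P : Set (ℝ × ℝ)} (hP : IsLatticePolygon P) : Convex ℝ P := by
  obtain ⟨F, -, rfl⟩ := hP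
  exact convex_convexHull ℝ _

theorem IsLatticePolygon.nonempty {P : Set (ℝ × ℝ)} (hP : IsLatticePolygon P) : P.Nonempty := by
  obtain ⟨F, hF, rfl⟩ := hP
  exact convexHull_nonempty_iff.2 ((Finset.coe_nonempty.2 hF).image toR2)

/-- Minkowski's inequality for lattice polygons:
`Vol₂(P)·Vol₂(Q) ≤ V(P,Q)²`. -/
theorem stmt_14 (P Q : Set (ℝ × ℝ)) (hP : IsLatticePolygon P)
    (hQ : IsLatticePolygon Q) : nvol P * nvol Q ≤ (mixedVol P Q) ^ 2 := by
  have hBM := sqrt_volumeReal_add_sqrt_volumeReal_le hP.isCompact hP.convex hP.nonempty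
    hQ.isCompact hQ.convex hQ.nonempty
  have := Real.four_mul_le_sq_sub_sub_of_sqrt_add_sqrt_le measureReal_nonneg measureReal_nonneg
    measureReal_nonneg hBM
  simp only [nvol, mixedVol, ← measureReal_def]
  convert this using 1 <;> ring
end
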